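/- arXiv:2201.11930 — 3 statements merged into one kernel-verified Lean document; each statement's English description precedes it below -/
import Mathlib

section
/- Assume M ≥ 1. The money-exchange chain is irreducible: for all ξ, ξ' ∈ S there exists t ∈ ℕ such that p_t(ξ, ξ') > 0. -/
open scoped Classical
open Finset

section MoneyExchange

variable {V : Type*} [Fintype V] [DecidableEq V] {K : ℕ}

/-- Move one coin from `x` to `y`. -/
def tau (x y : V) (ξ : V → ℤ) : V → ℤ :=
  fun z => ξ z - (if z = x then 1 else 0) + (if z = y then 1 else 0)

/-- Total (nonpositive) debt of the customers of bank `i`: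
`∑_{z ∈ Vᵢ} ξ(z) · 1{ξ(z) < 0}`. -/
def bankDebt (bank : V → Fin K) (ξ : V → ℤ) (i : Fin K) : ℤ :=
  ∑ z ∈ univ.filter fun z => bank z = i, min (ξ z) 0

/-- Admissible configurations: total money `M` and each bank lends at most `Rᵢ`. -/
def admissible (bank : V → Fin K) (R : Fin K → ℕ) (M : ℕ) (ξ : V → ℤ) : Prop :=
  (∑ z, ξ z) = (M : ℤ) ∧ ∀ i, -(R i : ℤ) ≤ bankDebt bank ξ i

/-- The move from `x` is allowed in `ξ`: `x` has a coin or its bank is nonempty. -/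
def allowed (bank : V → Fin K) (R : Fin K → ℕ) (ξ : V → ℤ) (x : V) : Prop :=
  0 < ξ x ∨ -(R (bank x) : ℤ) < bankDebt bank ξ (bank x)

/-- One-step transition probability of the money-exchange chain: each ordered
adjacent pair `(x, y)` is chosen with probability `1/(2|E|)`, and a coin moves
from `x` to `y` whenever the move from `x` is allowed; otherwise nothing happens. -/
noncomputable def step (G : SimpleGraph V) (bank : V → Fin K) (R : Fin K → ℕ)
    (ξ ξ' : V → ℤ) : ℝ :=
  (((univ.filter fun pq : V × V =>
        G.Adj pq.1 pq.2 ∧ allowed bank R ξ pq.1 ∧ tau pq.1 pq.2 ξ = ξ').card : ℝ)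
      + if ξ' = ξ then
          ((univ.filter fun pq : V × V =>
            G.Adj pq.1 pq.2 ∧ ¬ allowed bank R ξ pq.1).card : ℝ)
        else 0)
    / ((univ.filter fun pq : V × V => G.Adj pq.1 pq.2).card : ℝ)

/-- `t`-step transition probability of the money-exchange chain. -/
noncomputable def stepT (G : SimpleGraph V) (bank : V → Fin K) (R : Fin K → ℕ) :
    ℕ → (V → ℤ) → (V → ℤ) → ℝ
  | 0, ξ, ξ' => if ξ = ξ' then 1 else 0
  | t + 1, ξ, ξ' =>
      ∑ η ∈ insert ξ ((univ.filter fun pq : V × V => G.Adj pq.1 pq.2).image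
          fun pq => tau pq.1 pq.2 ξ),
        step G bank R ξ η * stepT G bank R t η ξ'

end MoneyExchange

section Aux

variable {V : Type*} [Fintype V] [DecidableEq V] {K : ℕ}
variable {G : SimpleGraph V} {bank : V → Fin K} {R : Fin K → ℕ} {M : ℕ}

/-- One allowed move of the chain. -/
def Move (G : SimpleGraph V) (bank : V → Fin K) (R : Fin K → ℕ)
    (η η' : V → ℤ) : Prop :=
  ∃ x y, G.Adj x y ∧ allowed bank R η x ∧ η' = tau x y η

/-- Reachability by allowed moves. -/
def Reach (G : SimpleGraph V) (bank : V → Fin K) (R : Fin K → ℕ) :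
    (V → ℤ) → (V → ℤ) → Prop :=
  Relation.ReflTransGen (Move G bank R)

lemma tau_self (a : V) (η : V → ℤ) : tau a a η = η := by
  funext z; simp [tau]

lemma tau_comp (a c b : V) (η : V → ℤ) : tau c b (tau a c η) = tau a b η := by
  funext z; simp only [tau]; ring

lemma tau_inv (a b : V) (η : V → ℤ) : tau b a (tau a b η) = η := by
  rw [tau_comp, tau_self]

lemma sum_tau (x y : V) (η : V → ℤ) : (∑ z, tau x y η z) = ∑ z, η z := by
  simp [tau, Finset.sum_add_distrib, Finset.sum_sub_distrib]

lemma sum_supported {s : Finset V} {h : V → ℤ} {x y : V} (hxy : x ≠ y)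
    (hh : ∀ z, z ≠ x → z ≠ y → h z = 0) :
    ∑ z ∈ s, h z = (if x ∈ s then h x else 0) + (if y ∈ s then h y else 0) := by
  classical
  have h1 : ∑ z ∈ s, h z = ∑ z ∈ s ∩ ({x, y} : Finset V), h z := by
    refine (Finset.sum_subset (Finset.inter_subset_left) ?_).symm
    intro z hz hz2
    refine hh z ?_ ?_ <;> rintro rfl <;>
      simp_all [Finset.mem_inter, Finset.mem_insert]
  rw [h1, Finset.inter_comm, ← Finset.sum_ite_mem, Finset.sum_pair hxy]

lemma bankDebt_tau {x y : V} (hxy : x ≠ y) (η : V → ℤ) (i : Fin K) :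
    bankDebt bank (tau x y η) i = bankDebt bank η i
      + (if bank x = i then min (η x - 1) 0 - min (η x) 0 else 0)
      + (if bank y = i then min (η y + 1) 0 - min (η y) 0 else 0) := by
  classical
  have key : ∑ z ∈ univ.filter (fun z => bank z = i),
      (min (tau x y η z) 0 - min (η z) 0)
      = (if x ∈ univ.filter (fun z => bank z = i) then
            min (tau x y η x) 0 - min (η x) 0 else 0)
        + (if y ∈ univ.filter (fun z => bank z = i) then
            min (tau x y η y) 0 - min (η y) 0 else 0) := by
    refine sum_supported hxy ?_
    intro z hzx hzy
    have : tau x y η z = η z := by simp [tau, hzx, hzy]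
    rw [this]; ring
  have htx : tau x y η x = η x - 1 := by simp [tau, hxy]
  have hty : tau x y η y = η y + 1 := by simp [tau, hxy.symm]
  have hsub : bankDebt bank (tau x y η) i - bankDebt bank η i
      = ∑ z ∈ univ.filter (fun z => bank z = i),
          (min (tau x y η z) 0 - min (η z) 0) := by
    rw [Finset.sum_sub_distrib]; rfl
  have := key
  rw [htx, hty] at this
  simp only [Finset.mem_filter, Finset.mem_univ, true_and] at this
  omega

/-- An allowed move preserves admissibility. -/
lemma admissible_tau {x y : V} (hxy : x ≠ y) {η : V → ℤ}
    (hη : admissible bank R M η) (hx : allowed bank R η x) :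
    admissible bank R M (tau x y η) := by
  obtain ⟨hsum, hdebt⟩ := hη
  refine ⟨by rw [sum_tau]; exact hsum, fun i => ?_⟩
  rw [bankDebt_tau hxy]
  rcases hx with hx | hx
  · have h1 := hdebt i
    split_ifs <;> omega
  · by_cases hbi : bank x = i
    · subst hbi
      have h2 := hx
      split_ifs <;> omega
    · have h1 := hdebt i
      split_ifs <;> omega

/-- After an allowed move from `x` to `y`, the move from `y` is allowed. -/
lemma allowed_tau {x y : V} (hxy : x ≠ y) {η : V → ℤ}
    (hη : admissible bank R M η) (hx : allowed bank R η x) :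
    allowed bank R (tau x y η) y := by
  obtain ⟨hsum, hdebt⟩ := hη
  by_cases hy : 0 ≤ η y
  · left
    have : tau x y η y = η y + 1 := by simp [tau, hxy.symm]
    omega
  · right
    rw [bankDebt_tau hxy]
    push_neg at hy
    rcases hx with hx | hx
    · have h1 := hdebt (bank y)
      split_ifs <;> omega
    · by_cases hbi : bank x = bank y
      · rw [hbi] at hx
        split_ifs <;> omega
      · have h1 := hdebt (bank y)
        split_ifs <;> omega

/-- Transport a coin from `a` along a walk to `b`. -/
lemma transport {a b : V} (w : G.Walk a b) :
    ∀ η : V → ℤ, admissible bank R M η → allowed bank R η a →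
      Reach G bank R η (tau a b η) ∧ admissible bank R M (tau a b η) := by
  induction w with
  | nil =>
      intro η hη _
      rw [tau_self]
      exact ⟨Relation.ReflTransGen.refl, hη⟩
  | @cons a c b hac w ih =>
      intro η hη ha
      have hne : a ≠ c := hac.ne
      have hη1 : admissible bank R M (tau a c η) := admissible_tau hne hη ha
      have hal1 : allowed bank R (tau a c η) c := allowed_tau hne hη ha
      obtain ⟨hr, hadm⟩ := ih (tau a c η) hη1 hal1
      rw [tau_comp] at hr hadm
      refine ⟨Relation.ReflTransGen.trans ?_ hr, hadm⟩
      exact Relation.ReflTransGen.single ⟨a, c, hac, ha, rfl⟩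

lemma reach_symm {ξ ξ' : V → ℤ} (h : Reach G bank R ξ ξ')
    (hξ : admissible bank R M ξ) :
    Reach G bank R ξ' ξ ∧ admissible bank R M ξ' := by
  induction h with
  | refl => exact ⟨Relation.ReflTransGen.refl, hξ⟩
  | @tail b c hab hbc ih =>
      obtain ⟨hr, hadm⟩ := ih
      obtain ⟨x, y, hadj, hal, rfl⟩ := hbc
      have hne : x ≠ y := hadj.ne
      refine ⟨Relation.ReflTransGen.trans (Relation.ReflTransGen.single ?_) hr,
        admissible_tau hne hadm hal⟩
      exact ⟨y, x, hadj.symm, allowed_tau hne hadm hal, (tau_inv x y b).symm⟩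

/-- Every admissible configuration reaches the canonical one (all money at `v0`). -/
lemma reach_canonical (hG : G.Connected) (hM : 1 ≤ M) (v0 : V) :
    ∀ n (ξ : V → ℤ), admissible bank R M ξ →
      (∑ z ∈ univ.erase v0, (ξ z).natAbs) ≤ n →
      Reach G bank R ξ (fun z => if z = v0 then (M : ℤ) else 0) := by
  intro n
  induction n with
  | zero =>
      intro ξ hξ hΦ
      have h0 : ∀ z ∈ univ.erase v0, (ξ z).natAbs = 0 := by
        intro z hz
        have := Finset.sum_le_sum_of_subset (Finset.singleton_subset_iff.mpr hz)
          (f := fun z => (ξ z).natAbs)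
        simp only [Finset.sum_singleton] at this
        omega
      have hξv0 : ξ v0 = (M : ℤ) := by
        have := hξ.1
        rw [← Finset.add_sum_erase _ _ (Finset.mem_univ v0)] at this
        have hz : ∑ z ∈ univ.erase v0, ξ z = 0 :=
          Finset.sum_eq_zero fun z hz => by have := h0 z hz; omega
        omega
      have : ξ = fun z => if z = v0 then (M : ℤ) else 0 := by
        funext z
        by_cases hz : z = v0
        · simp [hz, hξv0]
        · have := h0 z (Finset.mem_erase.mpr ⟨hz, Finset.mem_univ z⟩)
          simp [hz]; omega
      rw [this]
      exact Relation.ReflTransGen.refl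
  | succ n ih =>
      intro ξ hξ hΦ
      by_cases h0 : ∀ z ∈ univ.erase v0, ξ z = 0
      · refine ih ξ hξ ?_
        have : (∑ z ∈ univ.erase v0, (ξ z).natAbs) = 0 :=
          Finset.sum_eq_zero fun z hz => by have := h0 z hz; omega
        omega
      push_neg at h0
      obtain ⟨z, hz, hzne⟩ := h0
      have hzv0 : z ≠ v0 := (Finset.mem_erase.mp hz).1
      by_cases hpos : ∃ w ∈ univ.erase v0, 0 < ξ w
      · obtain ⟨w, hw, hwpos⟩ := hpos
        obtain ⟨walk⟩ := hG.preconnected w v0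
        obtain ⟨hr, hadm⟩ := transport walk ξ hξ (Or.inl hwpos)
        refine Relation.ReflTransGen.trans hr (ih _ hadm ?_)
        have hwv0 : w ≠ v0 := (Finset.mem_erase.mp hw).1
        have hlt : (∑ u ∈ univ.erase v0, (tau w v0 ξ u).natAbs)
            < ∑ u ∈ univ.erase v0, (ξ u).natAbs := by
          refine Finset.sum_lt_sum (fun u hu => ?_) ⟨w, hw, ?_⟩
          · have huv0 : u ≠ v0 := (Finset.mem_erase.mp hu).1
            simp only [tau, if_neg huv0]
            split_ifs <;> subst_vars <;> omega
          · have : tau w v0 ξ w = ξ w - 1 := by simp [tau, hwv0]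
            rw [this]; omega
        exact Nat.lt_succ_iff.mp (lt_of_lt_of_le hlt hΦ)
      · push_neg at hpos
        have hzneg : ξ z < 0 := by
          have := hpos z hz
          omega
        have hv0pos : 0 < ξ v0 := by
          have hsum := hξ.1
          rw [← Finset.add_sum_erase _ _ (Finset.mem_univ v0)] at hsum
          have hnp : ∑ u ∈ univ.erase v0, ξ u ≤ 0 :=
            Finset.sum_nonpos fun u hu => hpos u hu
          have hM' : 1 ≤ (M : ℤ) := by exact_mod_cast hM
          omega
        obtain ⟨walk⟩ := hG.preconnected v0 z
        obtain ⟨hr, hadm⟩ := transport walk ξ hξ (Or.inl hv0pos)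
        refine Relation.ReflTransGen.trans hr (ih _ hadm ?_)
        have hlt : (∑ u ∈ univ.erase v0, (tau v0 z ξ u).natAbs)
            < ∑ u ∈ univ.erase v0, (ξ u).natAbs := by
          refine Finset.sum_lt_sum (fun u hu => ?_) ⟨z, hz, ?_⟩
          · have huv0 : u ≠ v0 := (Finset.mem_erase.mp hu).1
            simp only [tau, if_neg huv0]
            split_ifs <;> subst_vars <;> omega
          · have hne : z ≠ v0 := hzv0
            have : tau v0 z ξ z = ξ z + 1 := by simp [tau, hne]
            rw [this]; omega
        exact Nat.lt_succ_iff.mp (lt_of_lt_of_le hlt hΦ)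

lemma edge_card_pos (hG : G.Connected) (hN : 2 ≤ Fintype.card V) :
    0 < (univ.filter fun pq : V × V => G.Adj pq.1 pq.2).card := by
  obtain ⟨u, v, huv⟩ := Fintype.exists_pair_of_one_lt_card (α := V) (by omega)
  obtain ⟨w⟩ := hG.preconnected u v
  cases w with
  | nil => exact absurd rfl huv
  | @cons _ c _ h _ =>
      exact Finset.card_pos.mpr ⟨(u, c), by simp [h]⟩

lemma step_nonneg (ξ ξ' : V → ℤ) : 0 ≤ step G bank R ξ ξ' := by
  unfold step
  apply div_nonneg _ (Nat.cast_nonneg _)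
  apply add_nonneg (Nat.cast_nonneg _)
  split_ifs <;> simp [Nat.cast_nonneg]

lemma stepT_nonneg (t : ℕ) (ξ ξ' : V → ℤ) : 0 ≤ stepT G bank R t ξ ξ' := by
  induction t generalizing ξ with
  | zero => simp only [stepT]; split_ifs <;> norm_num
  | succ t ih =>
      simp only [stepT]
      exact Finset.sum_nonneg fun η _ => mul_nonneg (step_nonneg ξ η) (ih η)

lemma step_pos (hG : G.Connected) (hN : 2 ≤ Fintype.card V) {x y : V}
    (hadj : G.Adj x y) {ξ : V → ℤ} (hal : allowed bank R ξ x) :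
    0 < step G bank R ξ (tau x y ξ) := by
  unfold step
  apply div_pos _ (by exact_mod_cast edge_card_pos hG hN)
  apply add_pos_of_pos_of_nonneg
  · have : (x, y) ∈ univ.filter fun pq : V × V =>
        G.Adj pq.1 pq.2 ∧ allowed bank R ξ pq.1 ∧ tau pq.1 pq.2 ξ = tau x y ξ := by
      simp [hadj, hal]
    exact_mod_cast Finset.card_pos.mpr ⟨(x, y), this⟩
  · split_ifs <;> simp [Nat.cast_nonneg]

lemma stepT_succ_pos {t : ℕ} {ξ η ξ' : V → ℤ} (h1 : 0 < step G bank R ξ η)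
    (h2 : 0 < stepT G bank R t η ξ') : 0 < stepT G bank R (t + 1) ξ ξ' := by
  have hmem : η ∈ insert ξ ((univ.filter fun pq : V × V => G.Adj pq.1 pq.2).image
      fun pq => tau pq.1 pq.2 ξ) := by
    by_cases hηξ : η = ξ
    · exact hηξ ▸ Finset.mem_insert_self _ _
    · have hden : (0 : ℝ) ≤ ((univ.filter fun pq : V × V => G.Adj pq.1 pq.2).card : ℝ) :=
        Nat.cast_nonneg _
      have hnum : 0 < (((univ.filter fun pq : V × V =>
          G.Adj pq.1 pq.2 ∧ allowed bank R ξ pq.1 ∧ tau pq.1 pq.2 ξ = η).card : ℝ)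
          + if η = ξ then ((univ.filter fun pq : V × V =>
              G.Adj pq.1 pq.2 ∧ ¬ allowed bank R ξ pq.1).card : ℝ) else 0) := by
        by_contra hle
        push_neg at hle
        have : step G bank R ξ η ≤ 0 :=
          div_nonpos_iff.mpr (Or.inr ⟨hle, hden⟩)
        linarith
      rw [if_neg hηξ, add_zero] at hnum
      have hcard : 0 < (univ.filter fun pq : V × V =>
          G.Adj pq.1 pq.2 ∧ allowed bank R ξ pq.1 ∧ tau pq.1 pq.2 ξ = η).card := by
        exact_mod_cast hnum
      obtain ⟨pq, hpq⟩ := Finset.card_pos.mp hcard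
      simp only [Finset.mem_filter, Finset.mem_univ, true_and] at hpq
      refine Finset.mem_insert_of_mem (Finset.mem_image.mpr ⟨pq, ?_, hpq.2.2⟩)
      simp [hpq.1]
  simp only [stepT]
  refine Finset.sum_pos' (fun η' _ => mul_nonneg (step_nonneg ξ η') (stepT_nonneg t η' ξ'))
    ⟨η, hmem, mul_pos h1 h2⟩

lemma reach_pos (hG : G.Connected) (hN : 2 ≤ Fintype.card V) {ξ ξ' : V → ℤ}
    (h : Reach G bank R ξ ξ') : ∃ t, 0 < stepT G bank R t ξ ξ' := by
  induction h using Relation.ReflTransGen.head_induction_on with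
  | refl => exact ⟨0, by simp [stepT]⟩
  | head hab _ ih =>
      obtain ⟨t, ht⟩ := ih
      obtain ⟨x, y, hadj, hal, rfl⟩ := hab
      exact ⟨t + 1, stepT_succ_pos (step_pos hG hN hadj hal) ht⟩

end Aux

theorem irreducibility {V : Type*} [Fintype V] [DecidableEq V] {K : ℕ} (hK : 1 ≤ K)
    (G : SimpleGraph V) (hG : G.Connected) (hN : 2 ≤ Fintype.card V)
    (bank : V → Fin K) (R : Fin K → ℕ) (M : ℕ) (hM : 1 ≤ M)
    (ξ ξ' : V → ℤ) (hξ : admissible bank R M ξ) (hξ' : admissible bank R M ξ') :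
    ∃ t : ℕ, 0 < stepT G bank R t ξ ξ' := by
  have hNV : Nonempty V := Fintype.card_pos_iff.mp (by omega)
  obtain ⟨v0⟩ := hNV
  have h1 : Reach G bank R ξ (fun z => if z = v0 then (M : ℤ) else 0) :=
    reach_canonical hG hM v0 _ ξ hξ le_rfl
  have h2 : Reach G bank R ξ' (fun z => if z = v0 then (M : ℤ) else 0) :=
    reach_canonical hG hM v0 _ ξ' hξ' le_rfl
  have h3 := (reach_symm h2 hξ').1
  exact reach_pos hG hN (Relation.ReflTransGen.trans h1 h3)
end

section
/- Let a₁, …, a_K and b₁, …, b_K be natural numbers such that, for each i, either aᵢ = bᵢ = 0, or 1 ≤ bᵢ ≤ min(aᵢ, Nᵢ) and aᵢ ≤ Rᵢ. Then the number of configurations ξ ∈ S satisfying, for every i = 1, …, K, ∑_{z ∈ Vᵢ} ξ(z)·1{ξ(z) < 0} = −aᵢ and |{z ∈ Vᵢ : ξ(z) < 0}| = bᵢ, equals [∏_{i=1}^{K} C(Nᵢ, bᵢ)·C(aᵢ−1, bᵢ−1)] · C(M + a₁ + … + a_K + N − b₁ − … − b_K − 1, N − b₁ − … − b_K − 1). 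-/
open scoped Classical
open Finset

/-- Binomial coefficient `C(a−1, b−1)` with the conventions: equal to `1` when
`a = b = 0`, to `0` when exactly one of `a`, `b` is `0`, and to `0` when
`b − 1 > a − 1`. -/
def ccat (a b : ℕ) : ℕ :=
  if a = 0 ∧ b = 0 then 1 else if a = 0 ∨ b = 0 then 0 else (a - 1).choose (b - 1)

/-- Binomial coefficient `C(s, t)` for integers `s`, `t`, equal to `0` whenever
`t < 0` or `t > s`. -/
def chooseZ (s t : ℤ) : ℕ :=
  if 0 ≤ t ∧ t ≤ s then s.toNat.choose t.toNat else 0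

/-- The counting function `Λ(n, r, m)`. -/
def Lambda {K : ℕ} (n r : Fin K → ℕ) (m : ℤ) : ℕ :=
  ∑ a ∈ Fintype.piFinset fun i : Fin K => Finset.range (r i + 1),
    ∑ b ∈ Fintype.piFinset fun i : Fin K => Finset.range (n i + 1),
      (∏ i, (n i).choose (b i) * ccat (a i) (b i)) *
        chooseZ (m + (∑ i, (a i : ℤ)) + (∑ i, (n i : ℤ)) - (∑ i, (b i : ℤ)) - 1)
                ((∑ i, (n i : ℤ)) - (∑ i, (b i : ℤ)) - 1)

section AuxCounting

private lemma my_card_sigma {ι : Type*} [Fintype ι] (f : ι → Type*) [∀ i, Finite (f i)] :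
    Nat.card (Σ i, f i) = ∑ i, Nat.card (f i) := by
  letI : ∀ i, Fintype (f i) := fun i => Fintype.ofFinite _
  simp [Nat.card_eq_fintype_card]

private lemma card_sum_fixed {α : Type*} [Fintype α] [DecidableEq α] (m : ℕ) :
    Nat.card {g : α → ℕ // ∑ z, g z = m} = Nat.multichoose (Fintype.card α) m := by
  rw [← Nat.card_congr (Sym.equivNatSumOfFintype α m), Nat.card_eq_fintype_card,
    Sym.card_sym_eq_multichoose]

private instance finSumFixed {α : Type*} [Fintype α] [DecidableEq α] (m : ℕ) :
    Finite {g : α → ℕ // ∑ z, g z = m} :=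
  Finite.of_equiv _ (Sym.equivNatSumOfFintype α m)

private instance finSumShift {α : Type*} [Fintype α] (c a : ℕ) :
    Finite {g : α → ℕ // (∑ z, g z) + c = a} := by
  apply Finite.of_injective (fun g => (fun z => (⟨g.1 z, by
    have h1 : g.1 z ≤ ∑ w, g.1 w := Finset.single_le_sum (fun w _ => Nat.zero_le _) (mem_univ z)
    have := g.2; omega⟩ : Fin (a + 1))))
  intro g h hgh
  ext z
  exact congrArg Fin.val (congrFun hgh z)

/-- shift equivalence for negative parts -/
private def negEquiv {α : Type*} [Fintype α] (a : ℕ) :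
    {f : α → ℤ // (∀ z, f z ≤ -1) ∧ ∑ z, f z = -(a : ℤ)} ≃
      {g : α → ℕ // (∑ z, g z) + Fintype.card α = a} where
  toFun f := ⟨fun z => (-(f.1 z) - 1).toNat, by
    obtain ⟨f, hf, hs⟩ := f
    have key : ∀ z ∈ (univ : Finset α), ((-(f z) - 1).toNat : ℤ) = -(f z) - 1 := fun z _ =>
      Int.toNat_of_nonneg (by have := hf z; omega)
    have h2 : ((∑ z, (-(f z) - 1).toNat : ℕ) : ℤ) + Fintype.card α = (a : ℤ) := by
      push_cast
      rw [Finset.sum_congr rfl key, Finset.sum_sub_distrib, Finset.sum_neg_distrib, hs]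
      simp [Finset.card_univ]
    exact_mod_cast h2⟩
  invFun g := ⟨fun z => -(g.1 z : ℤ) - 1, fun z => by
      show -(g.1 z : ℤ) - 1 ≤ -1
      omega, by
    have h2 : ((∑ z, g.1 z : ℕ) : ℤ) + Fintype.card α = (a : ℤ) := by exact_mod_cast g.2
    rw [Finset.sum_sub_distrib, Finset.sum_neg_distrib]
    push_cast at h2 ⊢
    simp [Finset.card_univ]
    omega⟩
  left_inv f := Subtype.ext (funext fun z => by
    have := f.2.1 z
    simp only
    omega)
  right_inv g := Subtype.ext (funext fun z => by simp only; omega)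

private lemma ccat_eq_zero_of_lt {a b : ℕ} (h : a < b) : ccat a b = 0 := by
  unfold ccat
  rcases Nat.eq_zero_or_pos a with ha | ha
  · simp [ha]; omega
  · rw [if_neg (by omega), if_neg (by omega)]
    exact Nat.choose_eq_zero_of_lt (by omega)

private lemma choose_shift (a b : ℕ) (hab : b ≤ a) :
    (b + (a - b) - 1).choose (a - b) = ccat a b := by
  rcases Nat.eq_zero_or_pos b with hb0 | hb0
  · subst hb0
    rcases Nat.eq_zero_or_pos a with ha | ha
    · subst ha; simp [ccat]
    · unfold ccat
      rw [if_neg (by omega), if_pos (by omega)]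
      simp only [Nat.zero_add]
      exact Nat.choose_eq_zero_of_lt (by omega)
  · unfold ccat
    rw [if_neg (by omega), if_neg (by omega)]
    have h1 : b + (a - b) - 1 = a - 1 := by omega
    rw [h1]
    have h2 : a - b = (a - 1) - (b - 1) := by omega
    rw [h2, Nat.choose_symm (by omega)]

private lemma card_negSingle {α : Type*} [Fintype α] [DecidableEq α] (a : ℕ) :
    Nat.card {f : α → ℤ // (∀ z, f z ≤ -1) ∧ ∑ z, f z = -(a : ℤ)}
      = ccat a (Fintype.card α) := by
  rw [Nat.card_congr (negEquiv a)]
  by_cases hab : Fintype.card α ≤ a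
  · rw [Nat.card_congr (Equiv.subtypeEquivRight
      (q := fun g : α → ℕ => ∑ z, g z = a - Fintype.card α)
      (fun g => by constructor <;> intro h <;> omega))]
    rw [card_sum_fixed, Nat.multichoose_eq]
    exact choose_shift a _ hab
  · have : IsEmpty {g : α → ℕ // (∑ z, g z) + Fintype.card α = a} := ⟨fun g => by
      have h1 : (0:ℕ) ≤ ∑ z, g.1 z := Nat.zero_le _
      have := g.2; omega⟩
    rw [Nat.card_of_isEmpty, ccat_eq_zero_of_lt (by omega)]

private instance finNegSingle {α : Type*} [Fintype α] (a : ℕ) :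
    Finite {f : α → ℤ // (∀ z, f z ≤ -1) ∧ ∑ z, f z = -(a : ℤ)} :=
  Finite.of_equiv _ (negEquiv a).symm

/-- split a constrained function over fibers of a classification map -/
private def splitEquiv {α : Type*} [Fintype α] {K : ℕ} (c : α → Fin K) (a : Fin K → ℕ) :
    {f : α → ℤ // (∀ z, f z ≤ -1) ∧
        ∀ i, ∑ z ∈ univ.filter (fun z => c z = i), f z = -(a i : ℤ)} ≃
    (∀ i : Fin K, {f : {z : α // c z = i} → ℤ //
        (∀ z, f z ≤ -1) ∧ ∑ z, f z = -(a i : ℤ)}) where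
  toFun f i := ⟨fun z => f.1 z.1, fun z => f.2.1 z.1, by
    rw [← f.2.2 i]
    exact (Finset.sum_subtype _ (by simp) _).symm⟩
  invFun F := ⟨fun z => (F (c z)).1 ⟨z, rfl⟩, fun z => (F (c z)).2.1 ⟨z, rfl⟩, fun i => by
    rw [Finset.sum_subtype (p := fun z => c z = i) _ (by simp) ]
    rw [← (F i).2.2]
    apply Finset.sum_congr rfl
    rintro ⟨z, hz⟩ _
    subst hz
    rfl⟩
  left_inv f := Subtype.ext (funext fun z => rfl)
  right_inv F := funext fun i => Subtype.ext (funext fun z => by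
    obtain ⟨z, hz⟩ := z
    subst hz
    rfl)

private lemma card_negSplit {α : Type*} [Fintype α] [DecidableEq α] {K : ℕ}
    (c : α → Fin K) (a : Fin K → ℕ) :
    Nat.card {f : α → ℤ // (∀ z, f z ≤ -1) ∧
        ∀ i, ∑ z ∈ univ.filter (fun z => c z = i), f z = -(a i : ℤ)}
      = ∏ i, ccat (a i) ((univ.filter fun z => c z = i).card) := by
  rw [Nat.card_congr (splitEquiv c a), Nat.card_pi]
  refine Finset.prod_congr rfl fun i _ => ?_
  rw [card_negSingle, Fintype.card_subtype]

private instance finNegSplit {α : Type*} [Fintype α] {K : ℕ} (c : α → Fin K) (a : Fin K → ℕ) :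
    Finite {f : α → ℤ // (∀ z, f z ≤ -1) ∧
        ∀ i, ∑ z ∈ univ.filter (fun z => c z = i), f z = -(a i : ℤ)} :=
  Finite.of_equiv _ (splitEquiv c a).symm

private lemma biUnion_inter_fiber {V : Type*} [Fintype V] [DecidableEq V] {K : ℕ}
    (bank : V → Fin K) (t : Fin K → Finset V)
    (ht : ∀ j, t j ⊆ univ.filter (fun z => bank z = j)) (i : Fin K) :
    (univ.biUnion t) ∩ (univ.filter fun z => bank z = i) = t i := by
  ext z
  simp only [mem_inter, mem_biUnion, mem_univ, true_and, mem_filter]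
  constructor
  · rintro ⟨⟨j, hzj⟩, hzi⟩
    have : bank z = j := (mem_filter.1 (ht j hzj)).2
    rwa [← this, hzi] at hzj
  · intro hz
    refine ⟨⟨i, hz⟩, (mem_filter.1 (ht i hz)).2⟩

private def subEquiv {V : Type*} [Fintype V] [DecidableEq V] {K : ℕ}
    (bank : V → Fin K) (b : Fin K → ℕ) :
    {s : Finset V // ∀ i, (s ∩ univ.filter (fun z => bank z = i)).card = b i} ≃
    (∀ i, {t : Finset V // t ∈ (univ.filter fun z => bank z = i).powersetCard (b i)}) where
  toFun s i := ⟨s.1 ∩ _, by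
    rw [mem_powersetCard]
    exact ⟨inter_subset_right, s.2 i⟩⟩
  invFun t := ⟨univ.biUnion fun i => (t i).1, fun i => by
    rw [biUnion_inter_fiber bank _ (fun j => (mem_powersetCard.1 (t j).2).1) i]
    exact (mem_powersetCard.1 (t i).2).2⟩
  left_inv s := Subtype.ext (by
    ext z
    simp only [mem_biUnion, mem_univ, true_and, mem_inter, mem_filter]
    constructor
    · rintro ⟨i, hz, _⟩; exact hz
    · intro hz; exact ⟨bank z, hz, rfl⟩)
  right_inv t := funext fun i => Subtype.ext
    (biUnion_inter_fiber bank _ (fun j => (mem_powersetCard.1 (t j).2).1) i)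

private lemma card_sub {V : Type*} [Fintype V] [DecidableEq V] {K : ℕ}
    (bank : V → Fin K) (b : Fin K → ℕ) :
    Nat.card {s : Finset V // ∀ i, (s ∩ univ.filter (fun z => bank z = i)).card = b i}
      = ∏ i, ((univ.filter fun z => bank z = i).card).choose (b i) := by
  rw [Nat.card_congr (subEquiv bank b), Nat.card_pi]
  refine Finset.prod_congr rfl fun i _ => ?_
  rw [Nat.card_eq_fintype_card, Fintype.card_coe, Finset.card_powersetCard]

private lemma multichoose_eq_chooseZ (N B m : ℕ) (hBN : B ≤ N) (h : B = N → 1 ≤ m) :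
    Nat.multichoose (N - B) m = chooseZ ((m : ℤ) + N - B - 1) ((N : ℤ) - B - 1) := by
  rcases eq_or_lt_of_le hBN with hEq | hLt
  · subst hEq
    have hm := h rfl
    rw [Nat.sub_self]
    cases m with
    | zero => omega
    | succ m => rw [Nat.multichoose_zero_succ, chooseZ, if_neg (by omega)]
  · rw [Nat.multichoose_eq, chooseZ, if_pos (by constructor <;> [omega; omega])]
    have h1 : ((m : ℤ) + N - B - 1).toNat = m + (N - B) - 1 := by omega
    have h2 : ((N : ℤ) - B - 1).toNat = (N - B) - 1 := by omega
    rw [h1, h2]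
    have h3 : N - B + m - 1 = m + (N - B) - 1 := by omega
    rw [h3]
    have h4 : (N - B) - 1 = (m + (N - B) - 1) - m := by omega
    rw [h4, Nat.choose_symm (by omega)]

section Main2

variable {V : Type*} [Fintype V] [DecidableEq V] {K : ℕ}

private lemma inter_eq_filter (s : Finset V) (p : V → Prop) [DecidablePred p] :
    s ∩ univ.filter p = s.filter p := by
  ext z; simp [mem_inter, mem_filter]

private lemma sum_inter_fiber (s : Finset V) (F : V → ℤ) (p : V → Prop) [DecidablePred p] :
    ∑ z ∈ univ.filter (fun z : ↥s => p z.1), F z.1 = ∑ z ∈ s ∩ univ.filter p, F z := by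
  rw [inter_eq_filter, univ_eq_attach, Finset.sum_filter, Finset.sum_filter]
  exact Finset.sum_attach s (fun z => if p z then F z else 0)

private lemma card_inter_fiber (s : Finset V) (p : V → Prop) [DecidablePred p] :
    (univ.filter (fun z : ↥s => p z.1)).card = (s ∩ univ.filter p).card := by
  rw [inter_eq_filter, univ_eq_attach, Finset.filter_attach, Finset.card_map,
    Finset.card_attach]

private lemma bankDebt_eq (bank : V → Fin K) (ξ : V → ℤ) (i : Fin K) :
    bankDebt bank ξ i = ∑ z ∈ univ.filter fun z => bank z = i ∧ ξ z < 0, ξ z := by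
  unfold bankDebt
  calc ∑ z ∈ univ.filter (fun z => bank z = i), min (ξ z) 0
      = ∑ z ∈ univ.filter (fun z => bank z = i), (if ξ z < 0 then ξ z else 0) :=
        Finset.sum_congr rfl fun z _ => by rw [min_def]; split_ifs <;> omega
    _ = ∑ z ∈ (univ.filter (fun z => bank z = i)).filter (fun z => ξ z < 0), ξ z :=
        (Finset.sum_filter _ _).symm
    _ = _ := by rw [Finset.filter_filter]

private lemma filter_and_eq (bank : V → Fin K) (ξ : V → ℤ) (s : Finset V)
    (hneg : univ.filter (fun z => ξ z < 0) = s) (i : Fin K) :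
    univ.filter (fun z => bank z = i ∧ ξ z < 0) = s ∩ univ.filter (fun z => bank z = i) := by
  ext z
  simp only [mem_filter, mem_univ, true_and, mem_inter]
  have hz : z ∈ s ↔ ξ z < 0 := by rw [← hneg]; simp
  tauto

private lemma sum_fiber_split (bank : V → Fin K) (s : Finset V) (F : V → ℤ) :
    ∑ z ∈ s, F z = ∑ i : Fin K, ∑ z ∈ s ∩ univ.filter (fun z => bank z = i), F z := by
  rw [← Finset.sum_fiberwise_of_maps_to (g := bank) (fun x _ => mem_univ (bank x)) F]
  exact Finset.sum_congr rfl fun i _ => by rw [inter_eq_filter]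



set_option linter.unusedSectionVars false

variable (bank : V → Fin K) (R : Fin K → ℕ) (M : ℕ) (a b : Fin K → ℕ)

private def glue (s : Finset V) (f : {z : V // z ∈ s} → ℤ) (g : {z : V // z ∉ s} → ℕ) :
    V → ℤ :=
  fun z => if h : z ∈ s then f ⟨z, h⟩ else ((g ⟨z, h⟩ : ℕ) : ℤ)

private lemma glue_mem (s : Finset V) (f : {z : V // z ∈ s} → ℤ) (g : {z : V // z ∉ s} → ℕ)
    (z : V) (h : z ∈ s) : glue s f g z = f ⟨z, h⟩ := dif_pos h

private lemma glue_not_mem (s : Finset V) (f : {z : V // z ∈ s} → ℤ) (g : {z : V // z ∉ s} → ℕ)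
    (z : V) (h : z ∉ s) : glue s f g z = (g ⟨z, h⟩ : ℤ) := dif_neg h

private def mainEquiv (haR : ∀ i, a i ≤ R i)
    (s : Finset V) (hs : ∀ i, (s ∩ (univ.filter fun z => bank z = i)).card = b i) :
    {ξ : V → ℤ // (admissible bank R M ξ ∧
        ∀ i, bankDebt bank ξ i = -(a i : ℤ) ∧
          (univ.filter fun z => bank z = i ∧ ξ z < 0).card = b i) ∧
        univ.filter (fun z => ξ z < 0) = s} ≃
    ({f : {z : V // z ∈ s} → ℤ // (∀ z, f z ≤ -1) ∧
        ∀ i, ∑ z ∈ univ.filter (fun z : ↥s => bank z.1 = i), f z = -(a i : ℤ)} ×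
     {g : {z : V // z ∉ s} → ℕ // ∑ z, g z = M + ∑ i, a i}) where
  toFun ξ :=
    ⟨⟨fun z => ξ.1 z.1, by
      obtain ⟨ξ, ⟨⟨hsum, hR⟩, hcond⟩, hneg⟩ := ξ
      have hmem : ∀ z, z ∈ s ↔ ξ z < 0 := fun z => by rw [← hneg]; simp
      constructor
      · intro z
        show ξ z.1 ≤ -1
        have := (hmem z.1).1 z.2
        omega
      · intro i
        show ∑ z ∈ univ.filter (fun z : ↥s => bank z.1 = i), ξ z.1 = -(a i : ℤ)
        rw [sum_inter_fiber s ξ (fun z => bank z = i), ← filter_and_eq bank ξ s hneg i,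
          ← bankDebt_eq]
        exact (hcond i).1⟩,
    ⟨fun z => (ξ.1 z.1).toNat, by
      obtain ⟨ξ, ⟨⟨hsum, hR⟩, hcond⟩, hneg⟩ := ξ
      have hmem : ∀ z, z ∈ s ↔ ξ z < 0 := fun z => by rw [← hneg]; simp
      show ∑ z : {z : V // z ∉ s}, (ξ z.1).toNat = M + ∑ i, a i
      have hnn : ∀ (z : V), z ∉ s → 0 ≤ ξ z := fun z hz => by
        have : ¬ ξ z < 0 := fun h => hz ((hmem z).2 h)
        omega
      have h2 : ∑ z ∈ s, ξ z = -∑ i, (a i : ℤ) := by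
        rw [sum_fiber_split bank s ξ, ← Finset.sum_neg_distrib]
        refine Finset.sum_congr rfl fun i _ => ?_
        rw [← filter_and_eq bank ξ s hneg i, ← bankDebt_eq]
        exact (hcond i).1
      have h1 : ∑ z ∈ s, ξ z + ∑ z ∈ sᶜ, ξ z = (M : ℤ) := by
        rw [Finset.sum_add_sum_compl]; exact hsum
      have h3 : ∑ z ∈ sᶜ, ξ z = ∑ z : {z : V // z ∉ s}, ξ z.1 :=
        Finset.sum_subtype (p := fun z => z ∉ s) sᶜ (by simp) ξ
      have hcast : ((∑ z : {z : V // z ∉ s}, (ξ z.1).toNat : ℕ) : ℤ)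
          = ∑ z : {z : V // z ∉ s}, ξ z.1 := by
        push_cast
        exact Finset.sum_congr rfl fun z _ => Int.toNat_of_nonneg (hnn z.1 z.2)
      have hfin : ((∑ z : {z : V // z ∉ s}, (ξ z.1).toNat : ℕ) : ℤ)
          = ((M + ∑ i, a i : ℕ) : ℤ) := by
        rw [hcast, ← h3]
        push_cast
        linarith
      exact_mod_cast hfin⟩⟩
  invFun fg := ⟨glue s fg.1.1 fg.2.1, by
    obtain ⟨⟨f, hf1, hf2⟩, ⟨g, hg⟩⟩ := fg
    set ξ := glue s f g with hξ
    have hmem : ∀ z, z ∈ s ↔ ξ z < 0 := fun z => by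
      by_cases h : z ∈ s
      · have h1 := glue_mem s f g z h
        rw [← hξ] at h1
        have h2 := hf1 ⟨z, h⟩
        constructor
        · intro _; omega
        · intro _; exact h
      · have h1 := glue_not_mem s f g z h
        rw [← hξ] at h1
        constructor
        · intro hzz; exact absurd hzz h
        · intro hlt; exfalso; omega
    have hneg : univ.filter (fun z => ξ z < 0) = s := by
      ext z
      simp only [mem_filter, mem_univ, true_and]
      exact ((hmem z).symm)
    have hdebt : ∀ i, bankDebt bank ξ i = -(a i : ℤ) := by
      intro i
      rw [bankDebt_eq, filter_and_eq bank ξ s hneg i,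
        ← sum_inter_fiber s ξ (fun z => bank z = i), ← hf2 i]
      exact Finset.sum_congr rfl fun z _ => glue_mem s f g z.1 z.2
    have hsum : ∑ z, ξ z = (M : ℤ) := by
      rw [← Finset.sum_add_sum_compl s ξ]
      have h2 : ∑ z ∈ s, ξ z = -∑ i, (a i : ℤ) := by
        rw [sum_fiber_split bank s ξ, ← Finset.sum_neg_distrib]
        refine Finset.sum_congr rfl fun i _ => ?_
        rw [← sum_inter_fiber s ξ (fun z => bank z = i), ← hf2 i]
        exact Finset.sum_congr rfl fun z _ => glue_mem s f g z.1 z.2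
      have h3 : ∑ z ∈ sᶜ, ξ z = ((M : ℤ) + ∑ i, (a i : ℤ)) := by
        rw [Finset.sum_subtype (p := fun z => z ∉ s) sᶜ (by simp) ξ]
        rw [Finset.sum_congr rfl fun z _ => glue_not_mem s f g z.1 z.2]
        rw [← Nat.cast_sum, hg]
        push_cast
        ring
      rw [h2, h3]
      ring
    refine ⟨⟨⟨hsum, fun i => ?_⟩, fun i => ⟨hdebt i, ?_⟩⟩, hneg⟩
    · rw [hdebt i]
      have := haR i
      omega
    · rw [filter_and_eq bank ξ s hneg i]
      exact hs i⟩
  left_inv ξ := Subtype.ext (funext fun z => by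
    obtain ⟨ξ, ⟨⟨hsum, hR⟩, hcond⟩, hneg⟩ := ξ
    have hmem : ∀ z, z ∈ s ↔ ξ z < 0 := fun z => by rw [← hneg]; simp
    show glue s _ _ z = ξ z
    by_cases h : z ∈ s
    · exact glue_mem s _ _ z h
    · have := glue_not_mem s (fun z : ↥s => ξ z.1) (fun z => (ξ z.1).toNat) z h
      rw [this]
      show ((ξ z).toNat : ℤ) = ξ z
      have : ¬ ξ z < 0 := fun hlt => h ((hmem z).2 hlt)
      omega)
  right_inv fg := by
    obtain ⟨⟨f, hf1, hf2⟩, ⟨g, hg⟩⟩ := fg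
    refine Prod.ext ?_ ?_
    · refine Subtype.ext (funext fun z => ?_)
      show glue s f g z.1 = f z
      exact glue_mem s f g z.1 z.2
    · refine Subtype.ext (funext fun z => ?_)
      show (glue s f g z.1).toNat = g z
      rw [glue_not_mem s f g z.1 z.2]
      exact Int.toNat_natCast _


end Main2

theorem card_debt_configurations {V : Type*} [Fintype V] [DecidableEq V] {K : ℕ}
    (hK : 1 ≤ K)
    (G : SimpleGraph V) (hG : G.Connected) (hN : 2 ≤ Fintype.card V)
    (bank : V → Fin K) (R : Fin K → ℕ) (M : ℕ)
    (n : Fin K → ℕ) (hn : ∀ i, n i = (Finset.univ.filter fun z => bank z = i).card)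
    (a b : Fin K → ℕ)
    (hab : ∀ i, (a i = 0 ∧ b i = 0) ∨
      (1 ≤ b i ∧ b i ≤ min (a i) (n i) ∧ a i ≤ R i)) :
    Nat.card {ξ : V → ℤ // admissible bank R M ξ ∧
        ∀ i, bankDebt bank ξ i = -(a i : ℤ) ∧
          (Finset.univ.filter fun z => bank z = i ∧ ξ z < 0).card = b i}
      = (∏ i, (n i).choose (b i) * ccat (a i) (b i)) *
          chooseZ ((M : ℤ) + (∑ i, (a i : ℤ)) + (Fintype.card V : ℤ)
              - (∑ i, (b i : ℤ)) - 1)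
            ((Fintype.card V : ℤ) - (∑ i, (b i : ℤ)) - 1) := by
  
  classical
  have haR : ∀ i, a i ≤ R i := fun i => by rcases hab i with ⟨h1, h2⟩ | ⟨h1, h2, h3⟩ <;> omega
  have hba : ∀ i, b i ≤ a i := fun i => by
    rcases hab i with ⟨h1, h2⟩ | ⟨h1, h2, h3⟩ <;> omega
  have hbn : ∀ i, b i ≤ n i := fun i => by
    rcases hab i with ⟨h1, h2⟩ | ⟨h1, h2, h3⟩ <;> omega
  have hNsum : Fintype.card V = ∑ i, n i := by
    rw [← Finset.card_univ]
    rw [Finset.card_eq_sum_card_fiberwise (f := bank) (t := univ) (fun x _ => mem_univ _)]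
    exact Finset.sum_congr rfl fun i _ => (hn i).symm
  have hBN : ∑ i, b i ≤ Fintype.card V := by
    rw [hNsum]; exact Finset.sum_le_sum fun i _ => hbn i
  -- the subtype and the fibration over negativity sets
  set T := {ξ : V → ℤ // admissible bank R M ξ ∧
      ∀ i, bankDebt bank ξ i = -(a i : ℤ) ∧
        (Finset.univ.filter fun z => bank z = i ∧ ξ z < 0).card = b i} with hT
  set Sub := {s : Finset V // ∀ i, (s ∩ (univ.filter fun z => bank z = i)).card = b i} with hSub
  have hΦmem : ∀ ξ : T, ∀ i,
      ((univ.filter fun z => ξ.1 z < 0) ∩ (univ.filter fun z => bank z = i)).card = b i := by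
    intro ξ i
    rw [← filter_and_eq bank ξ.1 _ rfl i]
    exact (ξ.2.2 i).2
  set Φ : T → Sub := fun ξ => ⟨univ.filter fun z => ξ.1 z < 0, hΦmem ξ⟩ with hΦ
  -- equivalence of each Φ-fiber with a product
  have fibEquiv : ∀ s : Sub, {x : T // Φ x = s} ≃
      ({f : {z : V // z ∈ s.1} → ℤ // (∀ z, f z ≤ -1) ∧
          ∀ i, ∑ z ∈ univ.filter (fun z : ↥s.1 => bank z.1 = i), f z = -(a i : ℤ)} ×
       {g : {z : V // z ∉ s.1} → ℕ // ∑ z, g z = M + ∑ i, a i}) := by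
    intro s
    refine Equiv.trans ?_ (mainEquiv bank R M a b haR s.1 s.2)
    exact {
      toFun := fun x => ⟨x.1.1, x.1.2, congrArg Subtype.val x.2⟩
      invFun := fun y => ⟨⟨y.1, y.2.1⟩, Subtype.ext y.2.2⟩
      left_inv := fun x => by ext; rfl
      right_inv := fun y => rfl }
  haveI : ∀ s : Sub, Finite {x : T // Φ x = s} := fun s =>
    Finite.of_equiv _ (fibEquiv s).symm
  -- compute the cardinality of each fiber
  have hcardfib : ∀ s : Sub, Nat.card {x : T // Φ x = s}
      = (∏ i, ccat (a i) (b i)) *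
        Nat.multichoose (Fintype.card V - ∑ i, b i) (M + ∑ i, a i) := by
    intro s
    rw [Nat.card_congr (fibEquiv s), Nat.card_prod]
    congr 1
    · rw [card_negSplit (fun z : ↥s.1 => bank z.1) a]
      refine Finset.prod_congr rfl fun i _ => ?_
      congr 1
      rw [card_inter_fiber s.1 (fun z => bank z = i)]
      exact s.2 i
    · rw [card_sum_fixed]
      congr 1
      rw [Fintype.card_subtype_compl, Fintype.card_coe]
      congr 1
      rw [Finset.card_eq_sum_card_fiberwise (f := bank) (t := univ) (fun x _ => mem_univ _)]
      refine Finset.sum_congr rfl fun i _ => ?_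
      rw [← inter_eq_filter]
      exact s.2 i
  -- sum over the fibration
  have hmain : Nat.card T = (∏ i, (n i).choose (b i)) * ((∏ i, ccat (a i) (b i)) *
      Nat.multichoose (Fintype.card V - ∑ i, b i) (M + ∑ i, a i)) := by
    rw [← Nat.card_congr (Equiv.sigmaFiberEquiv Φ), my_card_sigma]
    rw [Finset.sum_congr rfl fun s _ => hcardfib s, Finset.sum_const, Finset.card_univ,
      smul_eq_mul]
    congr 1
    rw [← Nat.card_eq_fintype_card, card_sub bank b]
    exact Finset.prod_congr rfl fun i _ => by rw [hn i]
  rw [hmain]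
  -- final arithmetic
  have hBle : (∑ i, b i = Fintype.card V) → 1 ≤ M + ∑ i, a i := by
    intro hEq
    have h1 : ∑ i, b i ≤ ∑ i, a i := Finset.sum_le_sum fun i _ => hba i
    omega
  have := multichoose_eq_chooseZ (Fintype.card V) (∑ i, b i) (M + ∑ i, a i) hBN hBle
  rw [this, Finset.prod_mul_distrib, mul_assoc]
  have e1 : (M : ℤ) + (∑ i, (a i : ℤ)) + (Fintype.card V : ℤ) - (∑ i, (b i : ℤ)) - 1
      = ((M + ∑ i, a i : ℕ) : ℤ) + (Fintype.card V) - (∑ i, b i : ℕ) - 1 := by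
    push_cast; ring
  have e2 : (Fintype.card V : ℤ) - (∑ i, (b i : ℤ)) - 1
      = ((Fintype.card V : ℕ) : ℤ) - ((∑ i, b i : ℕ) : ℤ) - 1 := by
    push_cast; ring
  rw [e1, e2]
end AuxCounting
end

section
/- Let j ∈ {1, …, K}, let x ∈ V_j, and let c be an integer with 0 ≤ c ≤ M. Then |{ξ ∈ S : ξ(x) = c}| = Λ((N₁, …, N_K) − e_j, (R₁, …, R_K), M − c), where e_j denotes the j-th standard unit vector of ℤ^K. Consequently, under the uniform distribution on S (the stationary distribution of the money-exchange chain), the probability that vertex x possesses exactly c coins equals Λ((N₁, …, N_K) − e_j, (R₁, …, R_K), M − c) / Λ((N₁, …, N_K), (R₁, …, R_K), M). -/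
open scoped Classical
open Finset

/-!
An admissible configuration `ξ` is determined by its debt vector `ν = max (-ξ) 0`, which respects
the reserves, together with its values on the zeros of `ν`: these are nonnegative and sum to
`m + ∑ ν`, so by stars and bars there are `C(m + ∑ ν + k - 1, k - 1)` of them, `k` being the
number of zeros. This count depends only on the bank-wise debts `a` and the bank-wise numbers `b`
of indebted customers, and the debt vectors with profile `(a, b)` are counted bank by bank:
choose the `bᵢ` indebted customers among `nᵢ`, then a composition of `aᵢ` into `bᵢ` positive parts,
giving `∏ C(nᵢ, bᵢ) C(aᵢ - 1, bᵢ - 1)`. Summing over profiles gives `Λ(n, R, m)`. Fixing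
`ξ x = c ≥ 0` leaves an admissible configuration of mass `M - c` on `V ∖ {x}`, where the bank of
`x` has one customer fewer.
-/

theorem Nat.card_subtype_eq_sum_card_fiberwise {α β : Type*} {P : α → Prop} (g : α → β)
    (t : Finset β) (hg : ∀ x, P x → g x ∈ t)
    (hfin : ∀ y ∈ t, Finite {x // P x ∧ g x = y}) :
    Nat.card {x // P x} = ∑ y ∈ t, Nat.card {x // P x ∧ g x = y} := by
  have : ∀ y : t, Finite {x // P x ∧ g x = y} := fun y => hfin y y.2
  let e : {x // P x} ≃ Σ y : t, {x // P x ∧ g x = y} :=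
    { toFun := fun x => ⟨⟨g x, hg x x.2⟩, x, x.2, rfl⟩
      invFun := fun s => ⟨s.2, s.2.2.1⟩
      left_inv := fun _ => rfl
      right_inv := fun s => Sigma.subtype_ext (Subtype.ext s.2.2.2) rfl }
  rw [Nat.card_congr e, Nat.card_sigma,
    Finset.sum_coe_sort t fun y => Nat.card {x // P x ∧ g x = y}]

theorem Nat.card_subtype_forall_fiber {W ι α : Type*} [Fintype ι] (f : W → ι)
    (P : ∀ i, ({z // f z = i} → α) → Prop) :
    Nat.card {ν : W → α // ∀ i, P i fun z => ν z} = ∏ i, Nat.card {μ // P i μ} := by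
  let e : (W → α) ≃ ∀ i, {z // f z = i} → α :=
    ((Equiv.sigmaFiberEquiv f).symm.arrowCongr (Equiv.refl α)).trans (Equiv.piCurry fun _ _ => α)
  have e' : {ν : W → α // ∀ i, P i fun z => ν z} ≃
      {μ : ∀ i, {z // f z = i} → α // ∀ i, P i (μ i)} :=
    e.subtypeEquiv fun _ => Iff.rfl
  rw [Nat.card_congr (e'.trans Equiv.subtypePiEquivPi), Nat.card_pi]

theorem card_sum_eq_multichoose (X : Type*) [Fintype X] (s : ℕ) :
    Nat.card {f : X → ℕ // ∑ z, f z = s} = (Fintype.card X).multichoose s := by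
  rw [← Nat.card_congr (Sym.equivNatSumOfFintype X s), Sym.natCard_sym_eq_multichoose,
    Nat.card_eq_fintype_card]

instance finite_subtype_sum_eq (X : Type*) [Fintype X] (s : ℕ) :
    Finite {f : X → ℕ // ∑ z, f z = s} :=
  Finite.of_equiv _ (Sym.equivNatSumOfFintype X s)

theorem Nat.card_subtype_eq_card_filter {α : Type*} {s : Finset α} {p : α → Prop}
    [DecidablePred p] (h : ∀ x, p x → x ∈ s) : Nat.card {x // p x} = #(s.filter p) := by
  rw [← Nat.card_eq_finsetCard]
  exact Nat.card_congr (Equiv.subtypeEquivRight fun x => by simpa using fun hx => h x hx)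

theorem ccat_eq_ite_multichoose (a b : ℕ) :
    ccat a b = if b ≤ a then b.multichoose (a - b) else 0 := by
  unfold ccat
  rcases Nat.eq_zero_or_pos a with rfl | ha <;> rcases Nat.eq_zero_or_pos b with rfl | hb
  · simp
  · simp [hb.ne', Nat.not_le.mpr hb]
  · obtain ⟨k, rfl⟩ := Nat.exists_eq_add_one_of_ne_zero ha.ne'
    simp [Nat.multichoose_zero_succ]
  · rw [if_neg (by omega), if_neg (by omega)]
    split_ifs with hba
    · rw [Nat.multichoose_eq, show b + (a - b) - 1 = a - 1 by omega,
        ← Nat.choose_symm (by omega : a - b ≤ a - 1), show a - 1 - (a - b) = b - 1 by omega]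
    · exact Nat.choose_eq_zero_of_lt (by omega)

theorem chooseZ_eq_multichoose {k s : ℕ} (h : k ≠ 0 ∨ s ≠ 0) :
    chooseZ ((s : ℤ) + k - 1) ((k : ℤ) - 1) = k.multichoose s := by
  unfold chooseZ
  rcases Nat.eq_zero_or_pos k with rfl | hk
  · obtain ⟨s, rfl⟩ := Nat.exists_eq_add_one_of_ne_zero (h.resolve_left (by simp))
    simp [Nat.multichoose_zero_succ]
  · rw [if_pos (by omega), Nat.multichoose_eq, show ((s : ℤ) + k - 1).toNat = k + s - 1 by omega,
      show ((k : ℤ) - 1).toNat = k - 1 by omega, ← Nat.choose_symm (by omega : s ≤ k + s - 1),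
      show k + s - 1 - s = k - 1 by omega]

section Support

variable {X : Type*} [Fintype X]

noncomputable def supportEqEquiv (S : Finset X) (a : ℕ) :
    {μ : X → ℕ // ∑ z, μ z = a ∧ univ.filter (μ · ≠ 0) = S} ≃
      {f : S → ℕ // ∑ z, f z + #S = a} where
  toFun μ := ⟨fun z => μ.1 z - 1, by
    obtain ⟨μ, hsum, rfl⟩ := μ
    have hpos : ∀ z : univ.filter (μ · ≠ 0), 1 ≤ μ z := fun z => by
      have := (mem_filter.mp z.2).2; omega
    calc ∑ z : univ.filter (μ · ≠ 0), (μ z - 1) + #(univ.filter (μ · ≠ 0))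
        = ∑ z : univ.filter (μ · ≠ 0), μ z := by
          rw [← Fintype.card_coe, ← card_univ, card_eq_sum_ones, ← sum_add_distrib]
          exact sum_congr rfl fun z _ => Nat.sub_add_cancel (hpos z)
      _ = a := by rw [sum_coe_sort _ μ, sum_filter_ne_zero, hsum]⟩
  invFun f := ⟨fun z => if h : z ∈ S then f.1 ⟨z, h⟩ + 1 else 0, by
    obtain ⟨f, hf⟩ := f
    calc ∑ z, (if h : z ∈ S then f ⟨z, h⟩ + 1 else 0)
        = ∑ z ∈ S, (if h : z ∈ S then f ⟨z, h⟩ + 1 else 0) :=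
          (sum_subset (subset_univ S) fun z _ hz => dif_neg hz).symm
      _ = ∑ z : S, (f z + 1) := by rw [← sum_coe_sort]; simp
      _ = a := by rw [sum_add_distrib, ← hf]; simp, by
    ext z; by_cases h : z ∈ S <;> simp [h]⟩
  left_inv μ := by
    obtain ⟨μ, hsum, rfl⟩ := μ
    ext z
    by_cases h : μ z = 0 <;> simp [h]
    omega
  right_inv f := by ext z; simp [z.2]

theorem card_sum_eq_support_eq (S : Finset X) (a : ℕ) :
    Nat.card {μ : X → ℕ // ∑ z, μ z = a ∧ univ.filter (μ · ≠ 0) = S} = ccat a #S := by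
  rw [Nat.card_congr (supportEqEquiv S a), ccat_eq_ite_multichoose]
  split_ifs with h
  · rw [← Fintype.card_coe S, ← card_sum_eq_multichoose]
    exact Nat.card_congr (Equiv.subtypeEquivRight fun f => by have := Fintype.card_coe S; omega)
  · have : IsEmpty {f : S → ℕ // ∑ z, f z + #S = a} := ⟨fun f => h (f.2 ▸ Nat.le_add_left _ _)⟩
    exact Nat.card_of_isEmpty

theorem card_sum_eq_card_support_eq (a b : ℕ) :
    Nat.card {μ : X → ℕ // ∑ z, μ z = a ∧ #(univ.filter (μ · ≠ 0)) = b} =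
      (Fintype.card X).choose b * ccat a b := by
  have hfin (S : Finset X) :
      Finite {μ : X → ℕ // (∑ z, μ z = a ∧ #(univ.filter (μ · ≠ 0)) = b) ∧
        univ.filter (μ · ≠ 0) = S} :=
    Finite.of_injective (fun μ => (⟨μ.1, μ.2.1.1⟩ : {μ : X → ℕ // ∑ z, μ z = a}))
      fun _ _ h => Subtype.ext (by simpa [Subtype.ext_iff] using h)
  rw [Nat.card_subtype_eq_sum_card_fiberwise (fun μ => univ.filter (μ · ≠ 0)) (powersetCard b univ)
    (fun μ hμ => mem_powersetCard.mpr ⟨subset_univ _, hμ.2⟩) fun S _ => hfin S]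
  have hfiber : ∀ S ∈ powersetCard b univ, Nat.card {μ : X → ℕ //
      (∑ z, μ z = a ∧ #(univ.filter (μ · ≠ 0)) = b) ∧ univ.filter (μ · ≠ 0) = S} = ccat a b := by
    intro S hS
    obtain rfl := (mem_powersetCard.mp hS).2
    rw [← card_sum_eq_support_eq S a]
    exact Nat.card_congr (Equiv.subtypeEquivRight fun μ =>
      ⟨fun h => ⟨h.1.1, h.2⟩, fun h => ⟨⟨h.1, h.2 ▸ rfl⟩, h.2⟩⟩)
  rw [sum_congr rfl hfiber, sum_const, card_powersetCard, card_univ, smul_eq_mul]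

end Support

theorem Fintype.sum_subtype_eq_sum_of_notMem {W M : Type*} [Fintype W] [AddCommMonoid M]
    (p : W → Prop) [DecidablePred p] (f : W → M) (hf : ∀ z, ¬p z → f z = 0) :
    ∑ z : {z // p z}, f z = ∑ z, f z := by
  rw [← sum_subtype_add_sum_subtype p f,
    Fintype.sum_eq_zero (fun z : {z // ¬p z} => f z) fun z => hf z z.2, add_zero]

section Configurations

variable {W : Type*} [Fintype W] {K : ℕ}

def debt (ξ : W → ℤ) (z : W) : ℕ := (-ξ z).toNat

def bankSum (bank : W → Fin K) (ν : W → ℕ) (i : Fin K) : ℕ := ∑ z : {z // bank z = i}, ν z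

def bankSupportCard (bank : W → Fin K) (ν : W → ℕ) (i : Fin K) : ℕ :=
  #(univ.filter fun z : {z // bank z = i} => ν z ≠ 0)

theorem bankDebt_eq_neg_bankSum_debt (bank : W → Fin K) (ξ : W → ℤ) (i : Fin K) :
    bankDebt bank ξ i = -(bankSum bank (debt ξ) i : ℤ) := by
  rw [bankDebt, sum_subtype (p := fun z => bank z = i) _ (fun z => by simp), bankSum,
    Nat.cast_sum, ← sum_neg_distrib]
  exact sum_congr rfl fun z _ => by simp only [debt]; omega

theorem admissible_iff (bank : W → Fin K) (R : Fin K → ℕ) (m : ℕ) (ξ : W → ℤ) :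
    admissible bank R m ξ ↔ ∑ z, ξ z = m ∧ ∀ i, bankSum bank (debt ξ) i ≤ R i := by
  simp only [admissible, bankDebt_eq_neg_bankSum_debt, neg_le_neg_iff, Nat.cast_le]

def debtEqEquiv (m : ℕ) (ν : W → ℕ) :
    {ξ : W → ℤ // ∑ z, ξ z = m ∧ debt ξ = ν} ≃
      {q : {z // ν z = 0} → ℕ // ∑ z, q z = m + ∑ z, ν z} where
  toFun ξ := ⟨fun z => (ξ.1 z).toNat, by
    obtain ⟨ξ, hsum, rfl⟩ := ξ
    zify
    rw [Fintype.sum_subtype_eq_sum_of_notMem _ (fun z => ((ξ z).toNat : ℤ))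
      fun z hz => by simp only [debt] at hz; omega, ← hsum, ← sum_add_distrib]
    exact sum_congr rfl fun z _ => by simp only [debt]; omega⟩
  invFun q := ⟨fun z => if h : ν z = 0 then (q.1 ⟨z, h⟩ : ℤ) else -(ν z : ℤ), by
    obtain ⟨q, hq⟩ := q
    have hext : ∑ z, (if h : ν z = 0 then (q ⟨z, h⟩ : ℤ) else 0) = m + ∑ z, (ν z : ℤ) := by
      rw [← Fintype.sum_subtype_eq_sum_of_notMem (ν · = 0) _ fun z hz => dif_neg hz]
      rw [sum_congr rfl fun z _ => dif_pos z.2]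
      exact_mod_cast hq
    calc ∑ z, (if h : ν z = 0 then (q ⟨z, h⟩ : ℤ) else -(ν z : ℤ))
        = ∑ z, ((if h : ν z = 0 then (q ⟨z, h⟩ : ℤ) else 0) - ν z) :=
          sum_congr rfl fun z _ => by split_ifs with h <;> simp [h]
      _ = m := by rw [sum_sub_distrib, hext]; ring, by
    ext z; by_cases h : ν z = 0 <;> simp [debt, h]⟩
  left_inv ξ := by
    obtain ⟨ξ, hsum, rfl⟩ := ξ
    ext z
    by_cases h : debt ξ z = 0 <;> simp only [debt] at h ⊢ <;> simp [h] <;> omega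
  right_inv q := by ext z; simp [z.2]

theorem card_bankSum_bankSupportCard_eq (bank : W → Fin K) (a b : Fin K → ℕ) :
    Nat.card {ν : W → ℕ // bankSum bank ν = a ∧ bankSupportCard bank ν = b} =
      ∏ i, (Fintype.card {z // bank z = i}).choose (b i) * ccat (a i) (b i) := by
  rw [← prod_congr rfl fun i _ => card_sum_eq_card_support_eq (X := {z // bank z = i}) (a i) (b i),
    ← Nat.card_subtype_forall_fiber bank]
  exact Nat.card_congr (Equiv.subtypeEquivRight fun ν => by
    simp only [funext_iff, ← forall_and]; rfl)

theorem card_zeros_add_sum_bankSupportCard (bank : W → Fin K) (ν : W → ℕ) :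
    Fintype.card {z // ν z = 0} + ∑ i, bankSupportCard bank ν i = Fintype.card W := by
  have hsupp : ∑ i, bankSupportCard bank ν i = Fintype.card {z // ¬ν z = 0} := by
    simp only [bankSupportCard, card_filter]
    rw [Fintype.sum_fiberwise bank fun z => if ν z ≠ 0 then 1 else 0, ← card_filter,
      Fintype.card_subtype]
  rw [hsupp, Fintype.card_subtype_compl]
  have := Fintype.card_subtype_le fun z => ν z = 0
  omega

theorem bankSum_eq_sum_ite (bank : W → Fin K) (ν : W → ℕ) (i : Fin K) :
    bankSum bank ν i = ∑ z, if bank z = i then ν z else 0 := by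
  rw [← sum_filter, bankSum, sum_subtype (p := fun z => bank z = i) _ fun z => by simp]

theorem le_bankSum (bank : W → Fin K) (ν : W → ℕ) (z : W) : ν z ≤ bankSum bank ν (bank z) :=
  single_le_sum (f := fun w : {w // bank w = bank z} => ν w) (fun _ _ => Nat.zero_le _)
    (mem_univ ⟨z, rfl⟩)

def admissibleDebtEqEquiv (bank : W → Fin K) (R : Fin K → ℕ) (m : ℕ) {ν : W → ℕ}
    (hν : ∀ i, bankSum bank ν i ≤ R i) :
    {ξ : W → ℤ // admissible bank R m ξ ∧ debt ξ = ν} ≃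
      {q : {z // ν z = 0} → ℕ // ∑ z, q z = m + ∑ z, ν z} :=
  (Equiv.subtypeEquivRight fun ξ => by
    rw [admissible_iff]
    constructor
    · rintro ⟨⟨hsum, -⟩, rfl⟩; exact ⟨hsum, rfl⟩
    · rintro ⟨hsum, rfl⟩; exact ⟨⟨hsum, hν⟩, rfl⟩).trans (debtEqEquiv m ν)

theorem multichoose_card_zeros_eq_chooseZ [Nonempty W] (bank : W → Fin K) (m : ℕ) (ν : W → ℕ) :
    (Fintype.card {z // ν z = 0}).multichoose (m + ∑ z, ν z) =
      chooseZ ((m : ℤ) + ∑ i, (bankSum bank ν i : ℤ) + Fintype.card W -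
          ∑ i, (bankSupportCard bank ν i : ℤ) - 1)
        ((Fintype.card W : ℤ) - ∑ i, (bankSupportCard bank ν i : ℤ) - 1) := by
  -- `chooseZ` and `multichoose` disagree only with no zeros and nothing to distribute,
  -- which `Nonempty W` rules out.
  have hne : Fintype.card {z // ν z = 0} ≠ 0 ∨ m + ∑ z, ν z ≠ 0 := by
    by_contra! h
    obtain ⟨w⟩ := ‹Nonempty W›
    have hw : ν w = 0 := sum_eq_zero_iff.mp (by omega) w (mem_univ w)
    exact (Fintype.card_pos_iff.mpr ⟨⟨w, hw⟩⟩).ne' h.1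
  have hzeros : (Fintype.card {z // ν z = 0} : ℤ) + ∑ i, (bankSupportCard bank ν i : ℤ) =
      Fintype.card W := by exact_mod_cast card_zeros_add_sum_bankSupportCard bank ν
  have hsum : ∑ i, (bankSum bank ν i : ℤ) = ((∑ z, ν z : ℕ) : ℤ) := by
    exact_mod_cast Fintype.sum_fiberwise bank ν
  rw [← chooseZ_eq_multichoose hne, hsum]
  congr 1 <;> push_cast <;> omega

noncomputable def debtVectors (bank : W → Fin K) (R : Fin K → ℕ) : Finset (W → ℕ) :=
  (Fintype.piFinset fun z => range (R (bank z) + 1)).filter fun ν => ∀ i, bankSum bank ν i ≤ R i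

theorem mem_debtVectors {bank : W → Fin K} {R : Fin K → ℕ} {ν : W → ℕ} :
    ν ∈ debtVectors bank R ↔ ∀ i, bankSum bank ν i ≤ R i :=
  ⟨fun h => (mem_filter.mp h).2, fun h => mem_filter.mpr ⟨Fintype.mem_piFinset.mpr fun z =>
    mem_range.mpr (Nat.lt_succ_of_le ((le_bankSum bank ν z).trans (h _))), h⟩⟩

def debtProfile (bank : W → Fin K) (ν : W → ℕ) : (Fin K → ℕ) × (Fin K → ℕ) :=
  (bankSum bank ν, bankSupportCard bank ν)

theorem debtProfile_mem_product (bank : W → Fin K) (R n : Fin K → ℕ)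
    (hn : ∀ i, Fintype.card {z // bank z = i} = n i) {ν : W → ℕ} (hν : ν ∈ debtVectors bank R) :
    debtProfile bank ν ∈ (Fintype.piFinset fun i => range (R i + 1)) ×ˢ
      (Fintype.piFinset fun i => range (n i + 1)) := by
  simp only [mem_product, Fintype.mem_piFinset, mem_range, Nat.lt_succ_iff]
  exact ⟨mem_debtVectors.mp hν, fun i => (card_filter_le _ _).trans (by rw [card_univ, hn])⟩

theorem card_debtVectors_filter_debtProfile_eq (bank : W → Fin K) {R a : Fin K → ℕ}
    (ha : ∀ i, a i ≤ R i) (b : Fin K → ℕ) :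
    #((debtVectors bank R).filter (debtProfile bank · = (a, b))) =
      ∏ i, (Fintype.card {z // bank z = i}).choose (b i) * ccat (a i) (b i) := by
  have hmem (ν : W → ℕ) (hν : debtProfile bank ν = (a, b)) : ν ∈ debtVectors bank R := by
    simp only [debtProfile, Prod.mk.injEq] at hν
    exact mem_debtVectors.mpr (hν.1 ▸ ha)
  rw [← Nat.card_subtype_eq_card_filter hmem, ← card_bankSum_bankSupportCard_eq]
  simp only [debtProfile, Prod.mk.injEq]

theorem card_admissible [Nonempty W] (bank : W → Fin K) (R : Fin K → ℕ) (m : ℕ) (n : Fin K → ℕ)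
    (hn : ∀ i, n i = #(univ.filter fun z => bank z = i)) :
    Nat.card {ξ : W → ℤ // admissible bank R m ξ} = Lambda n R m := by
  have hcard : ∀ i, Fintype.card {z // bank z = i} = n i := fun i => by
    rw [hn, Fintype.card_subtype]
  have hN : ∑ i, n i = Fintype.card W := by
    simp only [← hcard, Fintype.card_eq_sum_ones]
    exact Fintype.sum_fiberwise bank fun _ => 1
  let H : (Fin K → ℕ) × (Fin K → ℕ) → ℕ := fun p =>
    chooseZ ((m : ℤ) + ∑ i, (p.1 i : ℤ) + ∑ i, (n i : ℤ) - ∑ i, (p.2 i : ℤ) - 1)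
      (∑ i, (n i : ℤ) - ∑ i, (p.2 i : ℤ) - 1)
  have hfiber : ∀ ν ∈ debtVectors bank R,
      Nat.card {ξ // admissible bank R m ξ ∧ debt ξ = ν} = H (debtProfile bank ν) := fun ν hν => by
    rw [Nat.card_congr (admissibleDebtEqEquiv bank R m (mem_debtVectors.mp hν)),
      card_sum_eq_multichoose, multichoose_card_zeros_eq_chooseZ bank, ← hN]
    push_cast; rfl
  have hfin : ∀ ν ∈ debtVectors bank R, Finite {ξ // admissible bank R m ξ ∧ debt ξ = ν} :=
    fun ν hν => Finite.of_equiv _ (admissibleDebtEqEquiv bank R m (mem_debtVectors.mp hν)).symm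
  calc Nat.card {ξ : W → ℤ // admissible bank R m ξ}
      = ∑ ν ∈ debtVectors bank R, Nat.card {ξ // admissible bank R m ξ ∧ debt ξ = ν} :=
        Nat.card_subtype_eq_sum_card_fiberwise debt _
          (fun ξ h => mem_debtVectors.mpr ((admissible_iff bank R m ξ).mp h).2) hfin
    _ = ∑ p ∈ (Fintype.piFinset fun i => range (R i + 1)) ×ˢ
          (Fintype.piFinset fun i => range (n i + 1)),
          ∑ ν ∈ (debtVectors bank R).filter (debtProfile bank · = p), H (debtProfile bank ν) := by
        rw [sum_congr rfl hfiber,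
          sum_fiberwise_of_maps_to fun ν => debtProfile_mem_product bank R n hcard]
    _ = ∑ p ∈ (Fintype.piFinset fun i => range (R i + 1)) ×ˢ
          (Fintype.piFinset fun i => range (n i + 1)),
          (∏ i, (n i).choose (p.2 i) * ccat (p.1 i) (p.2 i)) * H p := by
        refine sum_congr rfl fun p hp => ?_
        have ha i : p.1 i ≤ R i :=
          Nat.lt_succ_iff.mp (mem_range.mp (Fintype.mem_piFinset.mp (mem_product.mp hp).1 i))
        rw [sum_congr rfl fun ν hν => by rw [(mem_filter.mp hν).2], sum_const, smul_eq_mul,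
          card_debtVectors_filter_debtProfile_eq bank ha]
        simp only [hcard]
    _ = Lambda n R m := sum_product' _ _
          fun a b => (∏ i, (n i).choose (b i) * ccat (a i) (b i)) * H (a, b)

end Configurations

section Restriction

variable {V α : Type*} [Fintype V] {K : ℕ}

def evalEqEquiv [DecidableEq V] (x : V) (c : α) (P : ({z // z ≠ x} → α) → Prop) :
    {ξ : V → α // P (fun z => ξ z) ∧ ξ x = c} ≃ {η : {z // z ≠ x} → α // P η} where
  toFun ξ := ⟨fun z => ξ.1 z, ξ.2.1⟩
  invFun η := ⟨fun z => if h : z = x then c else η.1 ⟨z, h⟩, by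
    refine ⟨?_, dif_pos rfl⟩
    convert η.2 using 2 with z
    exact dif_neg z.2⟩
  left_inv ξ := by
    ext z
    by_cases h : z = x
    · subst h; simp [ξ.2.2]
    · simp [h]
  right_inv η := by ext z; simp [z.2]

theorem bankSum_restrict (bank : V → Fin K) {ν : V → ℕ} {x : V} (hx : ν x = 0) (i : Fin K) :
    bankSum (fun z : {z // z ≠ x} => bank z) (fun z => ν z) i = bankSum bank ν i := by
  rw [bankSum_eq_sum_ite, bankSum_eq_sum_ite, Fintype.sum_eq_add_sum_subtype_ne _ x, hx,
    ite_self, zero_add]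

theorem admissible_iff_restrict (bank : V → Fin K) (R : Fin K → ℕ) {M m : ℕ} {x : V}
    {ξ : V → ℤ} (hx : 0 ≤ ξ x) (hm : (m : ℤ) + ξ x = M) :
    admissible bank R M ξ ↔ admissible (fun z : {z // z ≠ x} => bank z) R m fun z => ξ z := by
  have hdebt : debt ξ x = 0 := by simp only [debt]; omega
  have hrestrict : debt (fun z : {z // z ≠ x} => ξ z) = fun z => debt ξ z.1 := rfl
  rw [admissible_iff, admissible_iff, Fintype.sum_eq_add_sum_subtype_ne ξ x, hrestrict]
  simp only [bankSum_restrict bank hdebt]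
  exact and_congr ⟨fun h => by omega, fun h => by omega⟩ Iff.rfl

theorem card_filter_restrict_eq_update (bank : V → Fin K) (x : V) {n : Fin K → ℕ}
    (hn : ∀ i, n i = #(univ.filter fun z => bank z = i)) (i : Fin K) :
    Function.update n (bank x) (n (bank x) - 1) i =
      #(univ.filter fun z : {z // z ≠ x} => bank z = i) := by
  have hsplit : n i = (if bank x = i then 1 else 0) +
      #(univ.filter fun z : {z // z ≠ x} => bank z = i) := by
    simp only [hn, card_filter]
    exact Fintype.sum_eq_add_sum_subtype_ne _ x
  rcases eq_or_ne i (bank x) with rfl | hi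
  · rw [Function.update_self, hsplit, if_pos rfl]; omega
  · rw [Function.update_of_ne hi, hsplit, if_neg (Ne.symm hi), zero_add]

end Restriction

theorem distribution_nonnegative_general {V : Type*} [Fintype V] {K : ℕ}
    (hN : 2 ≤ Fintype.card V)
    (bank : V → Fin K) (R : Fin K → ℕ) (M : ℕ)
    (n : Fin K → ℕ) (hn : ∀ i, n i = (Finset.univ.filter fun z => bank z = i).card)
    (j : Fin K) (x : V) (hx : bank x = j)
    (c : ℤ) (hc0 : 0 ≤ c) (hcM : c ≤ (M : ℤ)) :
    Nat.card {ξ : V → ℤ // admissible bank R M ξ ∧ ξ x = c}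
        = Lambda (Function.update n j (n j - 1)) R ((M : ℤ) - c) ∧
      (Nat.card {ξ : V → ℤ // admissible bank R M ξ ∧ ξ x = c} : ℝ)
          / (Nat.card {ξ : V → ℤ // admissible bank R M ξ} : ℝ)
        = (Lambda (Function.update n j (n j - 1)) R ((M : ℤ) - c) : ℝ)
          / (Lambda n R (M : ℤ) : ℝ) := by
  subst hx
  have : Nonempty V := ⟨x⟩
  have : Nonempty {z // z ≠ x} :=
    (Fintype.exists_ne_of_one_lt_card hN x).elim fun z hz => ⟨⟨z, hz⟩⟩
  obtain ⟨m, hm⟩ : ∃ m : ℕ, (m : ℤ) = M - c := ⟨(M - c).toNat, by omega⟩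
  have hfixed : Nat.card {ξ : V → ℤ // admissible bank R M ξ ∧ ξ x = c} =
      Lambda (Function.update n (bank x) (n (bank x) - 1)) R ((M : ℤ) - c) := by
    have e : {ξ : V → ℤ // admissible bank R M ξ ∧ ξ x = c} ≃
        {η : {z // z ≠ x} → ℤ // admissible (fun z : {z // z ≠ x} => bank z) R m η} :=
      (Equiv.subtypeEquivRight fun ξ => and_congr_left fun hξ =>
        admissible_iff_restrict bank R (M := M) (hξ ▸ hc0) (by omega)).trans (evalEqEquiv x c _)
    rw [Nat.card_congr e, card_admissible _ R m _ (card_filter_restrict_eq_update bank x hn), hm]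
  exact ⟨hfixed, by rw [hfixed, card_admissible bank R M n hn]⟩

theorem distribution_nonnegative {V : Type*} [Fintype V] [DecidableEq V] {K : ℕ}
    (hK : 1 ≤ K)
    (G : SimpleGraph V) (hG : G.Connected) (hN : 2 ≤ Fintype.card V)
    (bank : V → Fin K) (R : Fin K → ℕ) (M : ℕ)
    (n : Fin K → ℕ) (hn : ∀ i, n i = (Finset.univ.filter fun z => bank z = i).card)
    (j : Fin K) (x : V) (hx : bank x = j)
    (c : ℤ) (hc0 : 0 ≤ c) (hcM : c ≤ (M : ℤ)) :
    Nat.card {ξ : V → ℤ // admissible bank R M ξ ∧ ξ x = c}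
        = Lambda (Function.update n j (n j - 1)) R ((M : ℤ) - c) ∧
      (Nat.card {ξ : V → ℤ // admissible bank R M ξ ∧ ξ x = c} : ℝ)
          / (Nat.card {ξ : V → ℤ // admissible bank R M ξ} : ℝ)
        = (Lambda (Function.update n j (n j - 1)) R ((M : ℤ) - c) : ℝ)
          / (Lambda n R (M : ℤ) : ℝ) :=
  distribution_nonnegative_general hN bank R M n hn j x hx c hc0 hcM
end
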